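/- The set α_3 = {(1/6, 1/6), (5/6, 1/6), (1/2, 5/6)} has distortion error ∫ min_{a∈α_3} ‖x−a‖² dP = 1/12 with respect to the Voronoi partition in which J_1 is assigned to (1/6,1/6), J_2 to (5/6,1/6), and J_3 ∪ J_4 to (1/2,5/6). -/

import Mathlib

open MeasureTheory Set
open scoped ENNReal

/-- The four contractive similarities of ratio 1/3 generating the Sierpiński carpet.
`S 0, S 1, S 2, S 3` correspond to `S_1, S_2, S_3, S_4` in the paper. -/
noncomputable def S (i : Fin 4) (p : ℝ × ℝ) : ℝ × ℝ :=
  (p.1 / 3 + (if i = 1 ∨ i = 3 then (2 : ℝ) / 3 else 0),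
   p.2 / 3 + (if i = 2 ∨ i = 3 then (2 : ℝ) / 3 else 0))

/-- Composition `S_{σ_1} ∘ ⋯ ∘ S_{σ_k}` along a word `σ`. -/
noncomputable def Sw (σ : List (Fin 4)) : ℝ × ℝ → ℝ × ℝ :=
  σ.foldr (fun i g => S i ∘ g) id

/-- The unit square `J = [0,1] × [0,1]`. -/
def K : Set (ℝ × ℝ) := Icc (0, 0) (1, 1)

/-- The basic square `J_σ = S_σ([0,1]²)`. -/
noncomputable def Jw (σ : List (Fin 4)) : Set (ℝ × ℝ) := Sw σ '' K

/-- The self-similarity equation `P = (1/4) ∑_{i=1}^4 P ∘ S_i⁻¹`. -/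
def SelfSimilar (P : Measure (ℝ × ℝ)) : Prop :=
  P = (1 / 4 : ℝ≥0∞) • P.map (S 0) + (1 / 4 : ℝ≥0∞) • P.map (S 1)
    + (1 / 4 : ℝ≥0∞) • P.map (S 2) + (1 / 4 : ℝ≥0∞) • P.map (S 3)

/-- Distortion error of a set `α` of points: `∫ min_{a∈α} ‖x−a‖² dP`
(squared Euclidean distance). -/
noncomputable def distortion (P : Measure (ℝ × ℝ)) (α : Set (ℝ × ℝ)) : ℝ :=
  ∫ x, (⨅ a ∈ α, ((x.1 - a.1) ^ 2 + (x.2 - a.2) ^ 2)) ∂P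

/-- The `n`-th quantization error. -/
noncomputable def Vq (P : Measure (ℝ × ℝ)) (n : ℕ) : ℝ :=
  sInf (distortion P '' {α | α.Finite ∧ α.Nonempty ∧ α.ncard ≤ n})

/-! Self-similarity forces `P` to live on `K = [0,1]²`: the points at distance `> r` from `K`
are mapped by each `S i⁻¹` into the points at distance `> 3r`, so their measure is zero. The four
squares `J_i ⊆ K` are pairwise disjoint, hence `P` restricted to `J_i` is `(1/4) P ∘ S_i⁻¹`.
The self-similarity equation for the first two moments gives `∫ x₁ dP = 1/2`, `∫ x₁² dP = 3/8`,
and the same for `x₂` by the symmetry of the carpet in the diagonal, so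
`∫ ‖x - a‖² dP = 1/4 + ‖a - (1/2, 1/2)‖²`. The three cells then contribute
`1/144 + 1/144 + (5/144 + 5/144) = 1/12`. -/

lemma continuous_S (i : Fin 4) : Continuous (S i) := by
  unfold S; fun_prop

lemma measurable_S (i : Fin 4) : Measurable (S i) := (continuous_S i).measurable

lemma isCompact_K : IsCompact K := isCompact_Icc

lemma nonempty_K : K.Nonempty := nonempty_Icc.2 zero_le_one

lemma mapsTo_S_K (i : Fin 4) : MapsTo (S i) K K := by
  intro p hp
  simp only [K, mem_Icc, Prod.le_def] at hp ⊢
  simp only [S]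
  split_ifs <;> constructor <;> constructor <;> linarith

lemma dist_S (i : Fin 4) (x y : ℝ × ℝ) : dist (S i x) (S i y) = dist x y / 3 := by
  simp only [Prod.dist_eq, S, Real.dist_eq, add_sub_add_right_eq_sub, ← sub_div, abs_div,
    abs_of_pos (three_pos : (0 : ℝ) < 3)]
  exact max_div_div_right (by norm_num) _ _

lemma infDist_S_K_le (i : Fin 4) (x : ℝ × ℝ) :
    Metric.infDist (S i x) K ≤ Metric.infDist x K / 3 := by
  obtain ⟨y, hyK, hy⟩ := isCompact_K.exists_infDist_eq_dist nonempty_K x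
  calc Metric.infDist (S i x) K ≤ dist (S i x) (S i y) :=
        Metric.infDist_le_dist_of_mem (mapsTo_S_K i hyK)
    _ = Metric.infDist x K / 3 := by rw [dist_S, hy]

lemma Jw_singleton (i : Fin 4) : Jw [i] = S i '' K := by
  simp [Jw, Sw]

lemma measurableSet_Jw_singleton (i : Fin 4) : MeasurableSet (Jw [i]) := by
  rw [Jw_singleton]
  exact (isCompact_K.image (continuous_S i)).isClosed.measurableSet

lemma disjoint_Jw_singleton {i j : Fin 4} (h : i ≠ j) : Disjoint (Jw [i]) (Jw [j]) := by
  simp only [Jw_singleton, disjoint_left, mem_image, not_exists, not_and]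
  rintro _ ⟨x, hx, rfl⟩ y hy hxy
  simp only [K, mem_Icc, Prod.le_def] at hx hy
  simp only [S, Prod.mk.injEq] at hxy
  fin_cases i <;> fin_cases j <;> simp at h hxy <;> linarith

section

variable {α : Type*} [MeasurableSpace α] {μ : Measure α} [IsProbabilityMeasure μ] {f : α → ℝ}

lemma integral_div_add (hf : Integrable f μ) (d c : ℝ) :
    ∫ x, (f x / d + c) ∂μ = (∫ x, f x ∂μ) / d + c := by
  rw [integral_add (hf.div_const d) (integrable_const c), integral_div, integral_const]
  simp

lemma integral_div_add_sq (hf : Integrable f μ) (hf2 : Integrable (fun x => f x ^ 2) μ)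
    (d c : ℝ) :
    ∫ x, (f x / d + c) ^ 2 ∂μ
      = (∫ x, f x ^ 2 ∂μ) / d ^ 2 + 2 * c * (∫ x, f x ∂μ) / d + c ^ 2 := by
  have h : ∀ x, (f x / d + c) ^ 2 = (f x ^ 2 / d ^ 2 + 2 * c / d * f x) + c ^ 2 := fun x => by
    ring
  simp_rw [h]
  rw [integral_add ?_ (integrable_const _), integral_add (hf2.div_const _) (hf.const_mul _),
    integral_div, integral_const_mul, integral_const]
  · simp only [probReal_univ, smul_eq_mul, one_mul]
    ring
  · exact (hf2.div_const _).add (hf.const_mul _)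

end

variable {P : Measure (ℝ × ℝ)}

namespace SelfSimilar

lemma measure_le_of_preimage_subset (hP : SelfSimilar P) {A B : Set (ℝ × ℝ)}
    (hA : MeasurableSet A) (hAB : ∀ i, S i ⁻¹' A ⊆ B) : P A ≤ P B := by
  conv_lhs => rw [hP]
  simp only [Measure.add_apply, Measure.smul_apply, Measure.map_apply (measurable_S _) hA,
    smul_eq_mul, one_div]
  calc 4⁻¹ * P (S 0 ⁻¹' A) + 4⁻¹ * P (S 1 ⁻¹' A) + 4⁻¹ * P (S 2 ⁻¹' A) + 4⁻¹ * P (S 3 ⁻¹' A)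
      ≤ 4⁻¹ * P B + 4⁻¹ * P B + 4⁻¹ * P B + 4⁻¹ * P B := by
        gcongr <;> apply hAB
    _ = (4 * 4⁻¹) * P B := by ring
    _ = P B := by rw [ENNReal.mul_inv_cancel (by norm_num) (by norm_num), one_mul]

lemma measure_infDist_gt_le (hP : SelfSimilar P) (r : ℝ) :
    P {x | r < Metric.infDist x K} ≤ P {x | 3 * r < Metric.infDist x K} :=
  hP.measure_le_of_preimage_subset
    (measurableSet_lt measurable_const (Metric.continuous_infDist_pt K).measurable)
    fun i x hx => by
      have := infDist_S_K_le i x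
      simp only [mem_preimage, mem_ofPred_eq] at hx ⊢
      linarith

lemma measure_infDist_gt_eq_zero [IsFiniteMeasure P] (hP : SelfSimilar P) {r : ℝ}
    (hr : 0 < r) : P {x | r < Metric.infDist x K} = 0 := by
  set A : ℕ → Set (ℝ × ℝ) := fun n => {x | 3 ^ n * r < Metric.infDist x K}
  have hA : ∀ n, P (A 0) ≤ P (A n) := by
    intro n
    induction n with
    | zero => rfl
    | succ n ih =>
      refine ih.trans ((hP.measure_infDist_gt_le _).trans_eq ?_)
      simp only [A, pow_succ, mul_comm _ (3 : ℝ), mul_assoc]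
  have hanti : Antitone A := fun m n hmn x (hx : 3 ^ n * r < _) =>
    lt_of_le_of_lt (by gcongr; norm_num) hx
  have hempty : ⋂ n, A n = ∅ := by
    refine eq_empty_of_forall_notMem fun x hx => ?_
    obtain ⟨n, hn⟩ := pow_unbounded_of_one_lt (Metric.infDist x K / r) (by norm_num : (1 : ℝ) < 3)
    have := mem_iInter.1 hx n
    simp only [A, mem_ofPred_eq] at this
    rw [div_lt_iff₀ hr] at hn
    linarith
  have h := hanti.measure_iInter
    (fun n => (measurableSet_lt measurable_const
      (Metric.continuous_infDist_pt K).measurable).nullMeasurableSet)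
    ⟨0, measure_ne_top P _⟩
  rw [hempty, measure_empty] at h
  simpa [A] using (le_iInf hA).trans h.ge

lemma ae_mem_K [IsFiniteMeasure P] (hP : SelfSimilar P) : ∀ᵐ x ∂P, x ∈ K := by
  have hsub : Kᶜ ⊆ ⋃ n : ℕ, {x | 1 / (n + 1 : ℝ) < Metric.infDist x K} := by
    intro x hx
    have hd : 0 < Metric.infDist x K :=
      (isCompact_K.isClosed.notMem_iff_infDist_pos nonempty_K).1 hx
    obtain ⟨n, hn⟩ := exists_nat_one_div_lt hd
    exact mem_iUnion.2 ⟨n, hn⟩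
  exact measure_mono_null hsub
    (measure_iUnion_null fun n => hP.measure_infDist_gt_eq_zero (by positivity))

lemma integrable_of_continuous [IsFiniteMeasure P] (hP : SelfSimilar P) {g : ℝ × ℝ → ℝ}
    (hg : Continuous g) : Integrable g P := by
  rw [← Measure.restrict_eq_self_of_ae_mem hP.ae_mem_K]
  exact hg.continuousOn.integrableOn_compact isCompact_K

lemma integrable_map_S [IsFiniteMeasure P] (hP : SelfSimilar P) {g : ℝ × ℝ → ℝ}
    (hg : Continuous g) (i : Fin 4) : Integrable g (P.map (S i)) :=
  (integrable_map_measure hg.aestronglyMeasurable (measurable_S i).aemeasurable).2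
    (hP.integrable_of_continuous (hg.comp (continuous_S i)))

lemma integral_eq_average_comp_S [IsFiniteMeasure P] (hP : SelfSimilar P) {g : ℝ × ℝ → ℝ}
    (hg : Continuous g) :
    ∫ x, g x ∂P = ((∫ x, g (S 0 x) ∂P) + (∫ x, g (S 1 x) ∂P)
      + (∫ x, g (S 2 x) ∂P) + (∫ x, g (S 3 x) ∂P)) / 4 := by
  have hi : ∀ i, Integrable g ((1 / 4 : ℝ≥0∞) • P.map (S i)) := fun i =>
    (hP.integrable_map_S hg i).smul_measure (by norm_num)
  conv_lhs => rw [hP]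
  rw [integral_add_measure (((hi 0).add_measure (hi 1)).add_measure (hi 2)) (hi 3),
    integral_add_measure ((hi 0).add_measure (hi 1)) (hi 2),
    integral_add_measure (hi 0) (hi 1)]
  simp only [integral_smul_measure,
    integral_map (measurable_S _).aemeasurable hg.aestronglyMeasurable]
  norm_num
  ring

lemma restrict_map_S_Jw_self [IsFiniteMeasure P] (hP : SelfSimilar P) (i : Fin 4) :
    (P.map (S i)).restrict (Jw [i]) = P.map (S i) := by
  refine Measure.restrict_eq_self_of_ae_mem ?_
  refine (ae_map_iff (measurable_S i).aemeasurable (measurableSet_Jw_singleton i)).2 ?_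
  filter_upwards [hP.ae_mem_K] with x hx
  exact Jw_singleton i ▸ mem_image_of_mem _ hx

lemma restrict_map_S_Jw_of_ne [IsFiniteMeasure P] (hP : SelfSimilar P) {i j : Fin 4}
    (h : j ≠ i) : (P.map (S j)).restrict (Jw [i]) = 0 := by
  rw [Measure.restrict_eq_zero, Measure.map_apply (measurable_S j) (measurableSet_Jw_singleton i)]
  refine measure_mono_null ?_ (ae_iff.1 hP.ae_mem_K)
  intro x hx hxK
  exact disjoint_left.1 (disjoint_Jw_singleton h) (Jw_singleton j ▸ mem_image_of_mem _ hxK) hx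

lemma restrict_Jw_singleton [IsFiniteMeasure P] (hP : SelfSimilar P) (i : Fin 4) :
    P.restrict (Jw [i]) = (1 / 4 : ℝ≥0∞) • P.map (S i) := by
  conv_lhs => rw [hP]
  simp only [Measure.restrict_add, Measure.restrict_smul]
  fin_cases i <;>
    simp [hP.restrict_map_S_Jw_self, hP.restrict_map_S_Jw_of_ne]

lemma setIntegral_Jw_singleton [IsFiniteMeasure P] (hP : SelfSimilar P) (i : Fin 4)
    {g : ℝ × ℝ → ℝ} (hg : Continuous g) :
    ∫ x in Jw [i], g x ∂P = (∫ x, g (S i x) ∂P) / 4 := by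
  rw [hP.restrict_Jw_singleton, integral_smul_measure,
    integral_map (measurable_S i).aemeasurable hg.aestronglyMeasurable]
  norm_num
  ring

lemma map_swap (hP : SelfSimilar P) : SelfSimilar (P.map Prod.swap) := by
  have hmap : ∀ i j, Prod.swap ∘ S i = S j ∘ Prod.swap →
      (P.map (S i)).map Prod.swap = (P.map Prod.swap).map (S j) := fun i j h => by
    rw [Measure.map_map measurable_swap (measurable_S i), h,
      Measure.map_map (measurable_S j) measurable_swap]
  unfold SelfSimilar
  conv_lhs => rw [hP]
  simp only [Measure.map_add _ _ measurable_swap, Measure.map_smul]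
  rw [hmap 0 0 (by ext p <;> simp +decide [S]), hmap 1 2 (by ext p <;> simp +decide [S]),
    hmap 2 1 (by ext p <;> simp +decide [S]), hmap 3 3 (by ext p <;> simp +decide [S]),
    add_right_comm (_ • _) (_ • (P.map Prod.swap).map (S 2))]

section Moments

variable [IsProbabilityMeasure P]

lemma integral_fst (hP : SelfSimilar P) : ∫ x, x.1 ∂P = 1 / 2 := by
  have h := hP.integral_eq_average_comp_S continuous_fst
  simp +decide only [S, if_true, if_false,
    integral_div_add (hP.integrable_of_continuous continuous_fst)] at h
  linarith

lemma integral_fst_sq (hP : SelfSimilar P) : ∫ x, x.1 ^ 2 ∂P = 3 / 8 := by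
  have h := hP.integral_eq_average_comp_S (g := fun x => x.1 ^ 2) (by fun_prop)
  simp +decide only [S, if_true, if_false,
    integral_div_add_sq (hP.integrable_of_continuous continuous_fst)
      (hP.integrable_of_continuous (continuous_fst.pow 2)), hP.integral_fst] at h
  linarith

lemma integral_fst_sub_sq (hP : SelfSimilar P) (a : ℝ) :
    ∫ x, (x.1 - a) ^ 2 ∂P = 1 / 8 + (a - 1 / 2) ^ 2 := by
  have h := integral_div_add_sq (hP.integrable_of_continuous continuous_fst)
      (hP.integrable_of_continuous (continuous_fst.pow 2)) 1 (-a)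
  simp only [div_one, ← sub_eq_add_neg, hP.integral_fst, hP.integral_fst_sq] at h
  rw [h]
  ring

lemma integral_snd_sub_sq (hP : SelfSimilar P) (b : ℝ) :
    ∫ x, (x.2 - b) ^ 2 ∂P = 1 / 8 + (b - 1 / 2) ^ 2 := by
  have := Measure.isProbabilityMeasure_map (μ := P) measurable_swap.aemeasurable
  rw [← hP.map_swap.integral_fst_sub_sq b,
    integral_map measurable_swap.aemeasurable (by fun_prop)]
  rfl

lemma integral_dist_sq (hP : SelfSimilar P) (a b : ℝ) :
    ∫ x, ((x.1 - a) ^ 2 + (x.2 - b) ^ 2) ∂P = 1 / 4 + (a - 1 / 2) ^ 2 + (b - 1 / 2) ^ 2 := by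
  rw [integral_add (hP.integrable_of_continuous (by fun_prop))
    (hP.integrable_of_continuous (by fun_prop)), hP.integral_fst_sub_sq, hP.integral_snd_sub_sq]
  ring

lemma setIntegral_Jw_singleton_dist_sq (hP : SelfSimilar P) (i : Fin 4) (a b : ℝ) :
    ∫ x in Jw [i], ((x.1 - a) ^ 2 + (x.2 - b) ^ 2) ∂P
      = (1 / 9 * (1 / 4) + ((S i (1 / 2, 1 / 2)).1 - a) ^ 2
        + ((S i (1 / 2, 1 / 2)).2 - b) ^ 2) / 4 := by
  obtain ⟨u, hu⟩ : ∃ u, ∀ p, (S i p).1 = p.1 / 3 + u := ⟨_, fun p => rfl⟩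
  obtain ⟨v, hv⟩ : ∃ v, ∀ p, (S i p).2 = p.2 / 3 + v := ⟨_, fun p => rfl⟩
  have h : ∀ x : ℝ × ℝ, ((S i x).1 - a) ^ 2 + ((S i x).2 - b) ^ 2
      = ((x.1 - 3 * (a - u)) ^ 2 + (x.2 - 3 * (b - v)) ^ 2) / 9 := fun x => by
    rw [hu, hv]
    ring
  rw [hP.setIntegral_Jw_singleton i (by fun_prop), funext h, integral_div,
    hP.integral_dist_sq, hu, hv]
  ring

end Moments

end SelfSimilar

/-- The distortion error of `α₃ = {(1/6,1/6), (5/6,1/6), (1/2,5/6)}` with respect to the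
Voronoi partition `J₁ ↦ (1/6,1/6)`, `J₂ ↦ (5/6,1/6)`, `J₃ ∪ J₄ ↦ (1/2,5/6)` is `1/12`. -/
theorem stmt_11 (P : Measure (ℝ × ℝ)) [IsProbabilityMeasure P] (hP : SelfSimilar P) :
    ∫ x in Jw [0], ((x.1 - 1 / 6) ^ 2 + (x.2 - 1 / 6) ^ 2) ∂P
      + ∫ x in Jw [1], ((x.1 - 5 / 6) ^ 2 + (x.2 - 1 / 6) ^ 2) ∂P
      + ∫ x in Jw [2] ∪ Jw [3], ((x.1 - 1 / 2) ^ 2 + (x.2 - 5 / 6) ^ 2) ∂P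
      = 1 / 12 := by
  rw [setIntegral_union (disjoint_Jw_singleton (by decide)) (measurableSet_Jw_singleton 3)
    (hP.integrable_of_continuous (by fun_prop)).integrableOn
    (hP.integrable_of_continuous (by fun_prop)).integrableOn]
  simp only [hP.setIntegral_Jw_singleton_dist_sq]
  norm_num +decide [S]
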